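/- arXiv:2603.27893 — 2 statements merged into one kernel-verified Lean document; each statement's English description precedes it below -/
import Mathlib

section
/- Suppose ℓ(y,w) ≥ 0 for all y ∈ ℝⁿ, w ∈ ℝᵐ, the terminal conditions hold (𝕏_f ⊆ 𝕏, and for every y ∈ 𝕏_f there exists w ∈ 𝕌 with f(y,w) ∈ 𝕏_f and V_f(f(y,w)) ≤ V_f(y) − ℓ(y,w)). Let (v*, z*) be an optimal pair for P_N(x), let a ≥ 0 and 1 ≤ M ≤ N, and let u be an (a,M)-admissible sequence at x with trajectory x(·). Then the successor state x⁺ := f(x, u(0)) admits an N-feasible input sequence: namely, if w ∈ 𝕌 is any input certifying the terminal condition at z*(N), the sequence (u(1),…,u(M−1), v*(M),…,v*(N−1), w) is N-feasible from x⁺, with trajectory (x(1),…,x(M), z*(M+1),…,z*(N), f(z*(N), w)). In particular, if x admits an optimal pair for P_N and an (a,M)-admissible sequence, then x⁺ lies in the set 𝒳_N of states in 𝕏 from which the N-feasible set is nonempty. (One-step recursive feasibility; part of Theorem 1(a) and Theorem 2(a).) -/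
/-! The successor's input sequence is the tail of `c = (u(0),…,u(M−1), v*(M),…,v*(N−1), w)`
applied from `x`. Since `x(M) = z*(M)`, the trajectory of `c` follows `x(·)` up to time `M` and
`z*(·)` from `M` to `N`, and the terminal input `w` keeps it in `𝕏_f` one step longer; so `c` is
`(N+1)`-feasible from `x`, and dropping its first step leaves an `N`-feasible sequence from
`x⁺ = f(x, u(0))`. -/

section Framework

variable {S I : Type*}

/-- The trajectory generated by dynamics `f` from initial state `x` under input sequence `v`. -/
def traj (f : S → I → S) (x : S) (v : ℕ → I) : ℕ → S
  | 0 => x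
  | k + 1 => f (traj f x v k) (v k)

/-- `v` is an `N`-feasible input sequence from `x`. -/
def Feasible (f : S → I → S) (X : Set S) (U : Set I) (Xf : Set S)
    (N : ℕ) (x : S) (v : ℕ → I) : Prop :=
  (∀ i < N, traj f x v i ∈ X ∧ v i ∈ U) ∧ traj f x v N ∈ Xf

/-- The MPC cost `V_N(x, v)`. -/
noncomputable def mpcCost (f : S → I → S) (l : S → I → ℝ) (Vf : S → ℝ)
    (N : ℕ) (x : S) (v : ℕ → I) : ℝ :=
  (∑ i ∈ Finset.range N, l (traj f x v i) (v i)) + Vf (traj f x v N)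

/-- `(v, z)` is an optimal pair for the problem `P_N(x)`. -/
def OptPair (f : S → I → S) (X : Set S) (U : Set I) (Xf : Set S)
    (l : S → I → ℝ) (Vf : S → ℝ) (N : ℕ) (x : S) (v : ℕ → I) (z : ℕ → S) : Prop :=
  Feasible f X U Xf N x v ∧ (∀ i, z i = traj f x v i) ∧
    ∀ w, Feasible f X U Xf N x w → mpcCost f l Vf N x v ≤ mpcCost f l Vf N x w

/-- `u` is an `(a, M)`-admissible input sequence at `x`, relative to the optimal pair `(v, z)`. -/
def Adm (f : S → I → S) (X : Set S) (U : Set I) (l : S → I → ℝ)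
    (a : ℝ) (M : ℕ) (x : S) (v : ℕ → I) (z : ℕ → S) (u : ℕ → I) : Prop :=
  (∀ i < M, traj f x u i ∈ X ∧ u i ∈ U) ∧
  ((∑ i ∈ Finset.range M, l (traj f x u i) (u i))
      - ∑ i ∈ Finset.range M, l (z i) (v i)) ≤ a * l x (u 0) ∧
  traj f x u M = z M

/-- The safety–stability set `𝕊(x)`. -/
def S2Set (f : S → I → S) (X : Set S) (U : Set I) (l : S → I → ℝ)
    (a : ℝ) (M : ℕ) (x : S) (v : ℕ → I) (z : ℕ → S) : Set I :=
  {w | ∃ u, Adm f X U l a M x v z u ∧ u 0 = w}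

/-- The value function `V_N^*`. -/
noncomputable def VStar (f : S → I → S) (X : Set S) (U : Set I) (Xf : Set S)
    (l : S → I → ℝ) (Vf : S → ℝ) (N : ℕ) (y : S) : ℝ :=
  sInf (mpcCost f l Vf N y '' {v | Feasible f X U Xf N y v})

/-- A K-function: continuous, strictly increasing on `[0, ∞)`, vanishing at `0`. -/
def IsKFun (α : ℝ → ℝ) : Prop :=
  Continuous α ∧ StrictMonoOn α (Set.Ici 0) ∧ α 0 = 0

end Framework

/-- The spliced input sequence `(u(1),…,u(M−1), v(M),…,v(N−1), w)` used for the
successor state. -/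
def spliceNext {I : Type*} (M N : ℕ) (u v : ℕ → I) (w : I) : ℕ → I :=
  fun i => if i + 1 < M then u (i + 1) else if i + 1 < N then v (i + 1) else w

section Splicing

variable {S I : Type*} {f : S → I → S} {X : Set S} {U : Set I} {Xf : Set S}

theorem traj_congr {x : S} {v w : ℕ → I} {k : ℕ} (h : ∀ i < k, v i = w i) :
    traj f x v k = traj f x w k := by
  induction k with
  | zero => rfl
  | succ k ih =>
    simp only [traj]
    rw [ih fun i hi => h i (by omega), h k k.lt_succ_self]

theorem traj_tail (x : S) (v : ℕ → I) (k : ℕ) :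
    traj f (f x (v 0)) (fun i => v (i + 1)) k = traj f x v (k + 1) := by
  induction k with
  | zero => rfl
  | succ k ih => simp only [traj] at ih ⊢; rw [ih]

theorem traj_piecewise_of_le {x : S} {u v : ℕ → I} {M k : ℕ} (hk : k ≤ M) :
    traj f x ((Set.Iio M).piecewise u v) k = traj f x u k :=
  traj_congr fun i hi => Set.piecewise_eq_of_mem (Set.Iio M) u v (show i < M by omega)

theorem traj_piecewise_of_ge {x : S} {u v : ℕ → I} {M k : ℕ}
    (hM : traj f x u M = traj f x v M) (hk : M ≤ k) :
    traj f x ((Set.Iio M).piecewise u v) k = traj f x v k := by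
  induction k, hk using Nat.le_induction with
  | base => rw [traj_piecewise_of_le le_rfl, hM]
  | succ k hMk ih =>
    simp only [traj]
    rw [ih, Set.piecewise_eq_of_notMem (Set.Iio M) u v (show ¬k < M by omega)]

theorem traj_piecewise_const_succ (x : S) (v : ℕ → I) (w : I) (N : ℕ) :
    traj f x ((Set.Iio N).piecewise v fun _ => w) (N + 1) = f (traj f x v N) w := by
  simp only [traj]
  rw [traj_piecewise_of_le le_rfl, Set.piecewise_eq_of_notMem (Set.Iio N) v _ (lt_irrefl N)]

theorem Feasible.tail {N : ℕ} {x : S} {v : ℕ → I} (h : Feasible f X U Xf (N + 1) x v) :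
    Feasible f X U Xf N (f x (v 0)) (fun i => v (i + 1)) := by
  refine ⟨fun i hi => ?_, ?_⟩ <;> rw [traj_tail]
  · exact h.1 (i + 1) (by omega)
  · exact h.2

theorem Feasible.piecewise_const {N : ℕ} {x : S} {v : ℕ → I} {w : I}
    (hv : Feasible f X U Xf N x v) (hXf : Xf ⊆ X) (hw : w ∈ U)
    (hwXf : f (traj f x v N) w ∈ Xf) :
    Feasible f X U Xf (N + 1) x ((Set.Iio N).piecewise v fun _ => w) := by
  refine ⟨fun i hi => ?_, by rwa [traj_piecewise_const_succ]⟩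
  rw [traj_piecewise_of_le (by omega)]
  rcases (Nat.lt_succ_iff.mp hi).lt_or_eq with hiN | rfl
  · rw [Set.piecewise_eq_of_mem (Set.Iio N) v _ hiN]
    exact hv.1 i hiN
  · rw [Set.piecewise_eq_of_notMem (Set.Iio i) v _ (lt_irrefl i)]
    exact ⟨hXf hv.2, hw⟩

theorem Feasible.piecewise {K M : ℕ} {x : S} {u v : ℕ → I} (hv : Feasible f X U Xf K x v)
    (hu : ∀ i < M, traj f x u i ∈ X ∧ u i ∈ U) (huv : traj f x u M = traj f x v M)
    (hMK : M ≤ K) :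
    Feasible f X U Xf K x ((Set.Iio M).piecewise u v) := by
  refine ⟨fun i hi => ?_, by rw [traj_piecewise_of_ge huv hMK]; exact hv.2⟩
  by_cases hiM : i < M
  · rw [traj_piecewise_of_le hiM.le, Set.piecewise_eq_of_mem (Set.Iio M) u v hiM]
    exact hu i hiM
  · rw [traj_piecewise_of_ge huv (not_lt.mp hiM), Set.piecewise_eq_of_notMem (Set.Iio M) u v hiM]
    exact hv.1 i hi

theorem traj_spliceNext {M : ℕ} (hM : 0 < M) (N : ℕ) (x : S) (u v : ℕ → I) (w : I) (k : ℕ) :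
    traj f (f x (u 0)) (spliceNext M N u v w) k =
      traj f x ((Set.Iio M).piecewise u ((Set.Iio N).piecewise v fun _ => w)) (k + 1) := by
  rw [← traj_tail, Set.piecewise_eq_of_mem (Set.Iio M) u _ hM]
  -- `spliceNext M N u v w` unfolds to the tail of the piecewise sequence.
  rfl

theorem Feasible.spliceNext {M N : ℕ} {x : S} {u v : ℕ → I} {w : I}
    (hv : Feasible f X U Xf N x v) (hu : ∀ i < M, traj f x u i ∈ X ∧ u i ∈ U)
    (huv : traj f x u M = traj f x v M) (hM : 0 < M) (hMN : M ≤ N) (hXf : Xf ⊆ X) (hw : w ∈ U)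
    (hwXf : f (traj f x v N) w ∈ Xf) :
    Feasible f X U Xf N (f x (u 0)) (spliceNext M N u v w) := by
  have hext := hv.piecewise_const hXf hw hwXf
  have htail := (hext.piecewise hu (by rwa [traj_piecewise_of_le hMN]) (by omega)).tail
  rwa [Set.piecewise_eq_of_mem (Set.Iio M) u _ hM] at htail

end Splicing

theorem one_step_recursive_feasibility_general {n m : ℕ}
    (f : EuclideanSpace ℝ (Fin n) → EuclideanSpace ℝ (Fin m) → EuclideanSpace ℝ (Fin n))
    (X : Set (EuclideanSpace ℝ (Fin n))) (U : Set (EuclideanSpace ℝ (Fin m)))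
    (Xf : Set (EuclideanSpace ℝ (Fin n)))
    (l : EuclideanSpace ℝ (Fin n) → EuclideanSpace ℝ (Fin m) → ℝ)
    (Vf : EuclideanSpace ℝ (Fin n) → ℝ)
    (N M : ℕ) (a : ℝ) (x : EuclideanSpace ℝ (Fin n))
    (vs : ℕ → EuclideanSpace ℝ (Fin m)) (zs : ℕ → EuclideanSpace ℝ (Fin n))
    (u : ℕ → EuclideanSpace ℝ (Fin m))
    (hXfX : Xf ⊆ X)
    (hterm : ∀ y ∈ Xf, ∃ w ∈ U, f y w ∈ Xf ∧ Vf (f y w) ≤ Vf y - l y w)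
    (hM1 : 1 ≤ M) (hMN : M ≤ N)
    (hopt : OptPair f X U Xf l Vf N x vs zs)
    (hadm : Adm f X U l a M x vs zs u) :
    (∀ w ∈ U, f (zs N) w ∈ Xf → Vf (f (zs N) w) ≤ Vf (zs N) - l (zs N) w →
      Feasible f X U Xf N (f x (u 0)) (spliceNext M N u vs w) ∧
      (∀ i, i + 1 ≤ M →
        traj f (f x (u 0)) (spliceNext M N u vs w) i = traj f x u (i + 1)) ∧
      (∀ i, M ≤ i → i + 1 ≤ N →
        traj f (f x (u 0)) (spliceNext M N u vs w) i = zs (i + 1)) ∧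
      traj f (f x (u 0)) (spliceNext M N u vs w) N = f (zs N) w) ∧
    (f x (u 0) ∈ X ∧ ∃ v', Feasible f X U Xf N (f x (u 0)) v') := by
  obtain ⟨hvs, hzs, -⟩ := hopt
  obtain ⟨hu, -, huM⟩ := hadm
  simp only [hzs] at huM ⊢
  have hsplice : ∀ w ∈ U, f (traj f x vs N) w ∈ Xf →
      Feasible f X U Xf N (f x (u 0)) (spliceNext M N u vs w) :=
    fun w hw hwXf => hvs.spliceNext hu huM hM1 hMN hXfX hw hwXf
  refine ⟨fun w hw hwXf _ => ?_, ?_⟩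
  · have hext : traj f x u M = traj f x ((Set.Iio N).piecewise vs fun _ => w) M := by
      rwa [traj_piecewise_of_le hMN]
    refine ⟨hsplice w hw hwXf, fun i hi => ?_, fun i hMi hiN => ?_, ?_⟩
    · rw [traj_spliceNext hM1, traj_piecewise_of_le hi]
    · rw [traj_spliceNext hM1, traj_piecewise_of_ge hext (by omega), traj_piecewise_of_le hiN]
    · rw [traj_spliceNext hM1, traj_piecewise_of_ge hext (by omega), traj_piecewise_const_succ]
  · obtain ⟨w, hw, hwXf, -⟩ := hterm _ hvs.2
    have hfeas := hsplice w hw hwXf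
    exact ⟨(hfeas.1 0 (by omega)).1, _, hfeas⟩

/-- One-step recursive feasibility (part of Theorem 1(a) and Theorem 2(a)). -/
theorem one_step_recursive_feasibility {n m : ℕ}
    (f : EuclideanSpace ℝ (Fin n) → EuclideanSpace ℝ (Fin m) → EuclideanSpace ℝ (Fin n))
    (X : Set (EuclideanSpace ℝ (Fin n))) (U : Set (EuclideanSpace ℝ (Fin m)))
    (Xf : Set (EuclideanSpace ℝ (Fin n)))
    (l : EuclideanSpace ℝ (Fin n) → EuclideanSpace ℝ (Fin m) → ℝ)
    (Vf : EuclideanSpace ℝ (Fin n) → ℝ)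
    (N M : ℕ) (a : ℝ) (x : EuclideanSpace ℝ (Fin n))
    (vs : ℕ → EuclideanSpace ℝ (Fin m)) (zs : ℕ → EuclideanSpace ℝ (Fin n))
    (u : ℕ → EuclideanSpace ℝ (Fin m))
    (hl : ∀ y w, 0 ≤ l y w)
    (hXfX : Xf ⊆ X)
    (hterm : ∀ y ∈ Xf, ∃ w ∈ U, f y w ∈ Xf ∧ Vf (f y w) ≤ Vf y - l y w)
    (ha : 0 ≤ a) (hM1 : 1 ≤ M) (hMN : M ≤ N)
    (hopt : OptPair f X U Xf l Vf N x vs zs)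
    (hadm : Adm f X U l a M x vs zs u) :
    (∀ w ∈ U, f (zs N) w ∈ Xf → Vf (f (zs N) w) ≤ Vf (zs N) - l (zs N) w →
      Feasible f X U Xf N (f x (u 0)) (spliceNext M N u vs w) ∧
      (∀ i, i + 1 ≤ M →
        traj f (f x (u 0)) (spliceNext M N u vs w) i = traj f x u (i + 1)) ∧
      (∀ i, M ≤ i → i + 1 ≤ N →
        traj f (f x (u 0)) (spliceNext M N u vs w) i = zs (i + 1)) ∧
      traj f (f x (u 0)) (spliceNext M N u vs w) N = f (zs N) w) ∧
    (f x (u 0) ∈ X ∧ ∃ v', Feasible f X U Xf N (f x (u 0)) v') :=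
  one_step_recursive_feasibility_general f X U Xf l Vf N M a x vs zs u hXfX hterm hM1 hMN hopt hadm
end

section
/- Suppose ℓ ≥ 0 and V_f ≥ 0 everywhere, and the terminal conditions hold (𝕏_f ⊆ 𝕏, and for every y ∈ 𝕏_f there exists w ∈ 𝕌 with f(y,w) ∈ 𝕏_f and V_f(f(y,w)) ≤ V_f(y) − ℓ(y,w)). Let (v*, z*) be an optimal pair for P_N(x), let a ≥ 0 and 1 ≤ M ≤ N, and let u be an (a,M)-admissible sequence at x. Then the value function satisfies the decrease inequality V_N*(f(x, u(0))) ≤ V_N*(x) − (1 − a)·ℓ(x, u(0)). (One-step Lyapunov decrease; the key inequality in the proofs of Theorem 1(b) and Theorem 2(b).) -/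
/-
Concatenate `u(0), …, u(M-1)`, then `v*(M), …, v*(N-1)` (possible since `u` steers `x` to
`z*(M)`), then the terminal input `w ∈ 𝕌` provided at `z*(N) ∈ 𝕏_f`. These `N + 1` inputs are
feasible from `x`, and dropping the first one leaves an `N`-feasible sequence from `f(x, u(0))`.
Its cost is at most `V_N(x, v*) - ℓ(x, u(0)) + a ℓ(x, u(0))`: admissibility bounds the first `M`
stages, and `ℓ(z*(N), w) + V_f(f(z*(N), w)) ≤ V_f(z*(N))` pays for the appended one.
-/

open Finset

section Splice

variable {S I : Type*} (f : S → I → S)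

def splice (M : ℕ) (u v : ℕ → I) : ℕ → I := fun j => if j < M then u j else v j

theorem splice_of_lt {M j : ℕ} (u v : ℕ → I) (h : j < M) : splice M u v j = u j := if_pos h

theorem splice_of_ge {M j : ℕ} (u v : ℕ → I) (h : M ≤ j) : splice M u v j = v j :=
  if_neg (not_lt.2 h)

theorem traj_splice_of_le {M i : ℕ} (x : S) (u v : ℕ → I) (hi : i ≤ M) :
    traj f x (splice M u v) i = traj f x u i := by
  induction i with
  | zero => rfl
  | succ k ih =>
    show f _ _ = f _ _
    rw [ih (by omega), splice_of_lt u v (by omega)]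

theorem traj_splice_of_ge {M i : ℕ} {x : S} {u v : ℕ → I}
    (hM : traj f x u M = traj f x v M) (hi : M ≤ i) :
    traj f x (splice M u v) i = traj f x v i := by
  induction i, hi using Nat.le_induction with
  | base => rw [traj_splice_of_le f x u v le_rfl, hM]
  | succ k hk ih =>
    show f _ _ = f _ _
    rw [ih, splice_of_ge u v hk]

theorem traj_shift (x : S) (v : ℕ → I) (i : ℕ) :
    traj f (f x (v 0)) (fun j => v (j + 1)) i = traj f x v (i + 1) := by
  induction i with
  | zero => rfl
  | succ k ih => exact congrArg (f · (v (k + 1))) ih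

end Splice

section Feasibility

variable {S I : Type*} {f : S → I → S} {X : Set S} {U : Set I} {Xf : Set S} {N : ℕ} {x : S}
  {v : ℕ → I}

theorem Feasible.splice_of_traj_eq {M : ℕ} {u : ℕ → I} (hv : Feasible f X U Xf N x v)
    (hu : ∀ i < M, traj f x u i ∈ X ∧ u i ∈ U) (hM : traj f x u M = traj f x v M)
    (hMN : M ≤ N) :
    Feasible f X U Xf N x (splice M u v) := by
  refine ⟨fun i hi => ?_, ?_⟩
  · rcases lt_or_ge i M with h | h
    · rw [traj_splice_of_le f x u v h.le, splice_of_lt u v h]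
      exact hu i h
    · rw [traj_splice_of_ge f hM h, splice_of_ge u v h]
      exact hv.1 i hi
  · rw [traj_splice_of_ge f hM hMN]
    exact hv.2

theorem Feasible.extend {w : I} (hv : Feasible f X U Xf N x v) (hXfX : Xf ⊆ X) (hw : w ∈ U)
    (hfw : f (traj f x v N) w ∈ Xf) :
    Feasible f X U Xf (N + 1) x (splice N v fun _ => w) := by
  have hN : traj f x (splice N v fun _ => w) N = traj f x v N := traj_splice_of_le f x _ _ le_rfl
  refine ⟨fun i hi => ?_, ?_⟩
  · rcases (Nat.lt_succ_iff.1 hi).lt_or_eq with h | rfl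
    · rw [traj_splice_of_le f x _ _ h.le, splice_of_lt _ _ h]
      exact hv.1 i h
    · rw [hN, splice_of_ge _ _ le_rfl]
      exact ⟨hXfX hv.2, hw⟩
  · show f _ _ ∈ Xf
    rw [hN, splice_of_ge _ _ le_rfl]
    exact hfw

theorem Feasible.shift (hv : Feasible f X U Xf (N + 1) x v) :
    Feasible f X U Xf N (f x (v 0)) (fun j => v (j + 1)) := by
  refine ⟨fun i hi => ?_, ?_⟩ <;> rw [traj_shift]
  · exact hv.1 (i + 1) (by omega)
  · exact hv.2

end Feasibility

section Cost

variable {S I : Type*} (f : S → I → S) (l : S → I → ℝ) (Vf : S → ℝ) {N : ℕ} {x : S}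
  {v : ℕ → I}

theorem mpcCost_splice {M : ℕ} {u : ℕ → I} (hM : traj f x u M = traj f x v M)
    (hMN : M ≤ N) :
    mpcCost f l Vf N x (splice M u v) = ∑ i ∈ range M, l (traj f x u i) (u i) +
      (mpcCost f l Vf N x v - ∑ i ∈ range M, l (traj f x v i) (v i)) := by
  have hhead : ∑ i ∈ range M, l (traj f x (splice M u v) i) (splice M u v i) =
      ∑ i ∈ range M, l (traj f x u i) (u i) := by
    refine sum_congr rfl fun i hi => ?_
    rw [mem_range] at hi
    rw [traj_splice_of_le f x u v hi.le, splice_of_lt u v hi]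
  have htail : ∑ i ∈ Ico M N, l (traj f x (splice M u v) i) (splice M u v i) =
      ∑ i ∈ Ico M N, l (traj f x v i) (v i) := by
    refine sum_congr rfl fun i hi => ?_
    rw [traj_splice_of_ge f hM (mem_Ico.1 hi).1, splice_of_ge u v (mem_Ico.1 hi).1]
  unfold mpcCost
  rw [← sum_range_add_sum_Ico _ hMN, ← sum_range_add_sum_Ico _ hMN, hhead, htail,
    traj_splice_of_ge f hM hMN]
  ring

theorem mpcCost_extend_le {w : I}
    (hw : Vf (f (traj f x v N) w) ≤ Vf (traj f x v N) - l (traj f x v N) w) :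
    mpcCost f l Vf (N + 1) x (splice N v fun _ => w) ≤ mpcCost f l Vf N x v := by
  have hN : traj f x (splice N v fun _ => w) N = traj f x v N := traj_splice_of_le f x _ _ le_rfl
  have hhead :
      ∑ i ∈ range N, l (traj f x (splice N v fun _ => w) i) (splice N v (fun _ => w) i) =
        ∑ i ∈ range N, l (traj f x v i) (v i) := by
    refine sum_congr rfl fun i hi => ?_
    rw [mem_range] at hi
    rw [traj_splice_of_le f x _ _ hi.le, splice_of_lt _ _ hi]
  unfold mpcCost
  rw [sum_range_succ, hhead, show traj f x (splice N v fun _ => w) (N + 1) =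
    f (traj f x (splice N v fun _ => w) N) (splice N v (fun _ => w) N) from rfl, hN,
    splice_of_ge _ _ le_rfl]
  linarith

theorem mpcCost_shift :
    l x (v 0) + mpcCost f l Vf N (f x (v 0)) (fun j => v (j + 1)) = mpcCost f l Vf (N + 1) x v := by
  simp only [mpcCost, traj_shift, sum_range_succ' _ N]
  rw [show traj f x v 0 = x from rfl]
  ring

theorem mpcCost_nonneg (hl : ∀ y w, 0 ≤ l y w) (hVf : ∀ y, 0 ≤ Vf y) :
    0 ≤ mpcCost f l Vf N x v :=
  add_nonneg (sum_nonneg fun _ _ => hl _ _) (hVf _)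

end Cost

section ValueFunction

variable {S I : Type*} {f : S → I → S} {X : Set S} {U : Set I} {Xf : Set S} {l : S → I → ℝ}
  {Vf : S → ℝ} {N : ℕ} {x : S} {v : ℕ → I}

theorem vStar_le_mpcCost (hl : ∀ y w, 0 ≤ l y w) (hVf : ∀ y, 0 ≤ Vf y)
    (hv : Feasible f X U Xf N x v) : VStar f X U Xf l Vf N x ≤ mpcCost f l Vf N x v :=
  csInf_le ⟨0, by rintro _ ⟨w, -, rfl⟩; exact mpcCost_nonneg f l Vf hl hVf⟩ ⟨v, hv, rfl⟩

theorem OptPair.vStar_eq {z : ℕ → S} (h : OptPair f X U Xf l Vf N x v z) :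
    VStar f X U Xf l Vf N x = mpcCost f l Vf N x v :=
  IsLeast.csInf_eq ⟨⟨v, h.1, rfl⟩, by rintro _ ⟨w, hw, rfl⟩; exact h.2.2 w hw⟩

end ValueFunction

theorem value_function_one_step_decrease_general {n m : ℕ}
    (f : EuclideanSpace ℝ (Fin n) → EuclideanSpace ℝ (Fin m) → EuclideanSpace ℝ (Fin n))
    (X : Set (EuclideanSpace ℝ (Fin n))) (U : Set (EuclideanSpace ℝ (Fin m)))
    (Xf : Set (EuclideanSpace ℝ (Fin n)))
    (l : EuclideanSpace ℝ (Fin n) → EuclideanSpace ℝ (Fin m) → ℝ)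
    (Vf : EuclideanSpace ℝ (Fin n) → ℝ)
    (N M : ℕ) (a : ℝ) (x : EuclideanSpace ℝ (Fin n))
    (vs : ℕ → EuclideanSpace ℝ (Fin m)) (zs : ℕ → EuclideanSpace ℝ (Fin n))
    (u : ℕ → EuclideanSpace ℝ (Fin m))
    (hl : ∀ y w, 0 ≤ l y w)
    (hVf : ∀ y, 0 ≤ Vf y)
    (hXfX : Xf ⊆ X)
    (hterm : ∀ y ∈ Xf, ∃ w ∈ U, f y w ∈ Xf ∧ Vf (f y w) ≤ Vf y - l y w)
    (hM1 : 1 ≤ M) (hMN : M ≤ N)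
    (hopt : OptPair f X U Xf l Vf N x vs zs)
    (hadm : Adm f X U l a M x vs zs u) :
    VStar f X U Xf l Vf N (f x (u 0)) ≤ VStar f X U Xf l Vf N x - (1 - a) * l x (u 0) := by
  have hfeas : Feasible f X U Xf N x vs := hopt.1
  obtain ⟨huXU, hucost, huM⟩ := hadm
  obtain ⟨w, hwU, hwXf, hwdec⟩ := hterm _ hfeas.2
  set vext := splice N vs fun _ => w
  have hvext_traj : ∀ i ≤ N, traj f x vext i = zs i := fun i hi => by
    rw [traj_splice_of_le f x _ _ hi, hopt.2.1]
  have hvext_lt : ∀ i < N, vext i = vs i := fun i hi => splice_of_lt _ _ hi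
  have hmeet : traj f x u M = traj f x vext M := by rw [huM, hvext_traj M hMN]
  set s := splice M u vext
  have hs_feas : Feasible f X U Xf (N + 1) x s :=
    (hfeas.extend hXfX hwU hwXf).splice_of_traj_eq huXU hmeet (by omega)
  have hvext_head :
      ∑ i ∈ range M, l (traj f x vext i) (vext i) = ∑ i ∈ range M, l (zs i) (vs i) :=
    sum_congr rfl fun i hi => by
      rw [mem_range] at hi
      rw [hvext_traj i (by omega), hvext_lt i (by omega)]
  have hs_cost : mpcCost f l Vf (N + 1) x s ≤ mpcCost f l Vf N x vs + a * l x (u 0) := by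
    rw [mpcCost_splice f l Vf hmeet (by omega), hvext_head]
    linarith [mpcCost_extend_le f l Vf hwdec]
  have hs0 : s 0 = u 0 := splice_of_lt _ _ (by omega)
  calc VStar f X U Xf l Vf N (f x (u 0))
      ≤ mpcCost f l Vf N (f x (s 0)) (fun j => s (j + 1)) :=
        hs0 ▸ vStar_le_mpcCost hl hVf hs_feas.shift
    _ = mpcCost f l Vf (N + 1) x s - l x (u 0) := by rw [← mpcCost_shift, hs0]; ring
    _ ≤ VStar f X U Xf l Vf N x - (1 - a) * l x (u 0) := by rw [hopt.vStar_eq]; linarith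

/-- One-step Lyapunov decrease of the value function
(key inequality in Theorem 1(b) and Theorem 2(b)). -/
theorem value_function_one_step_decrease {n m : ℕ}
    (f : EuclideanSpace ℝ (Fin n) → EuclideanSpace ℝ (Fin m) → EuclideanSpace ℝ (Fin n))
    (X : Set (EuclideanSpace ℝ (Fin n))) (U : Set (EuclideanSpace ℝ (Fin m)))
    (Xf : Set (EuclideanSpace ℝ (Fin n)))
    (l : EuclideanSpace ℝ (Fin n) → EuclideanSpace ℝ (Fin m) → ℝ)
    (Vf : EuclideanSpace ℝ (Fin n) → ℝ)
    (N M : ℕ) (a : ℝ) (x : EuclideanSpace ℝ (Fin n))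
    (vs : ℕ → EuclideanSpace ℝ (Fin m)) (zs : ℕ → EuclideanSpace ℝ (Fin n))
    (u : ℕ → EuclideanSpace ℝ (Fin m))
    (hl : ∀ y w, 0 ≤ l y w)
    (hVf : ∀ y, 0 ≤ Vf y)
    (hXfX : Xf ⊆ X)
    (hterm : ∀ y ∈ Xf, ∃ w ∈ U, f y w ∈ Xf ∧ Vf (f y w) ≤ Vf y - l y w)
    (ha : 0 ≤ a) (hM1 : 1 ≤ M) (hMN : M ≤ N)
    (hopt : OptPair f X U Xf l Vf N x vs zs)
    (hadm : Adm f X U l a M x vs zs u) :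
    VStar f X U Xf l Vf N (f x (u 0)) ≤ VStar f X U Xf l Vf N x - (1 - a) * l x (u 0) :=
  value_function_one_step_decrease_general f X U Xf l Vf N M a x vs zs u hl hVf hXfX hterm hM1 hMN
    hopt hadm
end
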